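/- Every two-sided ideal of T_n, the algebra of upper triangular n×n complex matrices, is an intersection of ideals of the form I(i₀,j₀) = { A ∈ T_n : A i j = 0 whenever i₀ ≤ i ≤ j ≤ j₀ } for various pairs 1 ≤ i₀ ≤ j₀ ≤ n (with the empty intersection interpreted as T_n itself). -/

import Mathlib

open Matrix

/-- The algebra `T_n` of upper triangular `n × n` complex matrices. -/
def UT (n : ℕ) : Subalgebra ℂ (Matrix (Fin n) (Fin n) ℂ) where
  carrier := {A | ∀ i j : Fin n, j < i → A i j = 0}
  add_mem' := by
    intro a b ha hb i j hij
    simp [Matrix.add_apply, ha i j hij, hb i j hij]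
  mul_mem' := by
    intro a b ha hb i j hij
    show ∑ k, a i k * b k j = 0
    apply Finset.sum_eq_zero
    intro k _
    rcases lt_or_ge k i with h | h
    · rw [ha i k h, zero_mul]
    · rw [hb k j (lt_of_lt_of_le hij h), mul_zero]
  algebraMap_mem' := by
    intro r i j hij
    simp [Matrix.algebraMap_matrix_apply, (ne_of_lt hij).symm]

/-- The "wedge" set `I(i₀, j₀)` of upper triangular matrices vanishing on the
wedge `i₀ ≤ i ≤ j ≤ j₀`. -/
def wedge (n : ℕ) (i₀ j₀ : Fin n) : Set (UT n) :=
  {A | ∀ i j : Fin n, i₀ ≤ i → i ≤ j → j ≤ j₀ → (A : Matrix (Fin n) (Fin n) ℂ) i j = 0}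
/-- The wedge ideal `I(i₀, j₀)` as a two-sided ideal of `T_n`. -/
def wedgeIdeal (n : ℕ) (i₀ j₀ : Fin n) : TwoSidedIdeal (UT n) :=
  TwoSidedIdeal.mk' (wedge n i₀ j₀)
    (by intro i j _ _ _; rfl)
    (by
      intro x y hx hy i j h1 h2 h3
      show (x : Matrix (Fin n) (Fin n) ℂ) i j + (y : Matrix (Fin n) (Fin n) ℂ) i j = 0
      rw [hx i j h1 h2 h3, hy i j h1 h2 h3, add_zero])
    (by
      intro x hx i j h1 h2 h3
      show -(x : Matrix (Fin n) (Fin n) ℂ) i j = 0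
      rw [hx i j h1 h2 h3, neg_zero])
    (by
      intro x y hy i j h1 h2 h3
      show ∑ k, (x : Matrix (Fin n) (Fin n) ℂ) i k * (y : Matrix (Fin n) (Fin n) ℂ) k j = 0
      apply Finset.sum_eq_zero
      intro k _
      rcases lt_or_ge k i with h | h
      · rw [x.2 i k h, zero_mul]
      · rcases le_or_gt k j with h' | h'
        · rw [hy k j (le_trans h1 h) h' h3, mul_zero]
        · rw [y.2 k j h', mul_zero])
    (by
      intro x y hx i j h1 h2 h3
      show ∑ k, (x : Matrix (Fin n) (Fin n) ℂ) i k * (y : Matrix (Fin n) (Fin n) ℂ) k j = 0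
      apply Finset.sum_eq_zero
      intro k _
      rcases lt_or_ge k i with h | h
      · rw [x.2 i k h, zero_mul]
      · rcases le_or_gt k j with h' | h'
        · rw [hx i k h1 h (le_trans h' h3), zero_mul]
        · rw [y.2 k j h', mul_zero])

/-!
Sandwiching by matrix units, `E i₀ i * B * E j j₀ = B i j • E i₀ j₀`, shows that an ideal `I`
containing a matrix with nonzero `(i, j)` entry contains `E i₀ j₀` for every `i₀ ≤ i ≤ j ≤ j₀`.
So if `S` is the set of positions at which every element of `I` vanishes, each `A ∈ I` vanishes
on all the wedges `I(i₀, j₀)` with `(i₀, j₀) ∈ S`; conversely a matrix vanishing on these wedges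
has its support outside `S`, hence is a combination of matrix units lying in `I`.
-/

namespace UT

variable {n : ℕ}

lemma single_mem {i j : Fin n} (h : i ≤ j) (c : ℂ) : Matrix.single i j c ∈ UT n := by
  intro k l hlk
  rw [Matrix.single_apply_of_ne]
  rintro ⟨rfl, rfl⟩
  exact hlk.not_ge h

def single {i j : Fin n} (h : i ≤ j) (c : ℂ) : UT n :=
  ⟨Matrix.single i j c, single_mem h c⟩

@[simp]
lemma coe_single {i j : Fin n} (h : i ≤ j) (c : ℂ) :
    (single h c : Matrix (Fin n) (Fin n) ℂ) = Matrix.single i j c :=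
  rfl

@[simp]
lemma single_zero {i j : Fin n} (h : i ≤ j) : single h 0 = 0 :=
  Subtype.ext (Matrix.single_zero i j)

lemma single_mul_mul_single {i₀ i j j₀ : Fin n} (h₁ : i₀ ≤ i) (h₂ : j ≤ j₀) (h : i₀ ≤ j₀)
    (a b : ℂ) (B : UT n) :
    single h₁ a * B * single h₂ b = single h (a * (B : Matrix (Fin n) (Fin n) ℂ) i j * b) :=
  Subtype.ext (Matrix.single_mul_mul_single _ _ _ _ _ _ _)

lemma single_mem_of_mem {I : TwoSidedIdeal (UT n)} {B : UT n} (hB : B ∈ I)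
    {i₀ i j j₀ : Fin n} (h₁ : i₀ ≤ i) (h₂ : j ≤ j₀) (h : i₀ ≤ j₀) (a b : ℂ) :
    single h (a * (B : Matrix (Fin n) (Fin n) ℂ) i j * b) ∈ I :=
  single_mul_mul_single h₁ h₂ h a b B ▸ I.mul_mem_right _ _ (I.mul_mem_left _ _ hB)

lemma single_mem_of_apply_ne_zero {I : TwoSidedIdeal (UT n)} {B : UT n} (hB : B ∈ I)
    {i j : Fin n} (hBij : (B : Matrix (Fin n) (Fin n) ℂ) i j ≠ 0) (h : i ≤ j) (c : ℂ) :
    single h c ∈ I := by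
  simpa [hBij] using
    single_mem_of_mem hB le_rfl le_rfl h c ((B : Matrix (Fin n) (Fin n) ℂ) i j)⁻¹

lemma mem_of_forall_single_mem {I : TwoSidedIdeal (UT n)} {A : UT n}
    (hA : ∀ i j (h : i ≤ j), single h ((A : Matrix (Fin n) (Fin n) ℂ) i j) ∈ I) : A ∈ I := by
  classical
  have hsum : A = ∑ i, ∑ j,
      if h : i ≤ j then single h ((A : Matrix (Fin n) (Fin n) ℂ) i j) else 0 := by
    refine Subtype.ext ((Matrix.matrix_eq_sum_single _).trans ?_)
    push_cast
    refine Fintype.sum_congr _ _ fun i => Fintype.sum_congr _ _ fun j => ?_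
    split_ifs with h
    · rfl
    · rw [A.2 i j (not_le.1 h), Matrix.single_zero, ZeroMemClass.coe_zero]
  rw [hsum]
  refine sum_mem fun i _ => sum_mem fun j _ => ?_
  split_ifs with h
  exacts [hA i j h, I.zero_mem]

end UT

lemma mem_wedgeIdeal {n : ℕ} {i₀ j₀ : Fin n} {A : UT n} :
    A ∈ wedgeIdeal n i₀ j₀ ↔ ∀ i j : Fin n, i₀ ≤ i → i ≤ j → j ≤ j₀ →
      (A : Matrix (Fin n) (Fin n) ℂ) i j = 0 :=
  TwoSidedIdeal.mem_mk' _ _ _ _ _ _ _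

/-- every two-sided ideal of `T_n` is an intersection of wedge ideals
`I(i₀,j₀)` (the empty intersection being all of `T_n`, i.e. `⊤`). -/
theorem ideal_eq_iInf_wedgeIdeals (n : ℕ) (I : TwoSidedIdeal (UT n)) :
    ∃ S : Set (Fin n × Fin n), (∀ p ∈ S, p.1 ≤ p.2) ∧
      I = ⨅ p ∈ S, wedgeIdeal n p.1 p.2 := by
  let S : Set (Fin n × Fin n) :=
    {p | p.1 ≤ p.2 ∧ ∀ B ∈ I, (B : Matrix (Fin n) (Fin n) ℂ) p.1 p.2 = 0}
  refine ⟨S, fun p hp => hp.1, le_antisymm (le_iInf₂ fun p hp A hA => ?_) fun A hA => ?_⟩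
  · refine mem_wedgeIdeal.2 fun i j h₁ h₂ h₃ => ?_
    simpa using hp.2 _ (UT.single_mem_of_mem hA h₁ h₃ hp.1 1 1)
  · refine UT.mem_of_forall_single_mem fun i j h => ?_
    by_cases hij : ∃ B ∈ I, (B : Matrix (Fin n) (Fin n) ℂ) i j ≠ 0
    · obtain ⟨B, hB, hBij⟩ := hij
      exact UT.single_mem_of_apply_ne_zero hB hBij h _
    · have hiS : (i, j) ∈ S := ⟨h, by simpa using hij⟩
      have hA' : A ∈ wedgeIdeal n i j := TwoSidedIdeal.le_iff.1 (iInf₂_le (i, j) hiS) hA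
      rw [mem_wedgeIdeal.1 hA' i j le_rfl h le_rfl, UT.single_zero]
      exact I.zero_mem
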